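/- Work in ℝ², fix j ∈ {1,2} and nonzero reals c_1, c_2, and for parameters (ρ_1, ρ_2, a_1, a_2, d_1, d_2) with ρ_1 c_1 ≠ 0 and ρ_2 c_2 ≠ 0 let A = (A_1, A_2) with A_k = [[a_k, ρ_k c_k],[c_k, d_k]]. Then for all Schwartz functions f, φ : ℝ² → ℂ, as (ρ_1, ρ_2, a_1, a_2, d_1, d_2) → (−1, −1, 0, 0, 0, 0), the pairing ∫_{ℝ²} [R_j^A f(x) − R_j f(x)] φ(x) dx converges to 0; that is, R_j^A f converges to R_j f in the space of tempered distributions on ℝ². -/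

import Mathlib

open MeasureTheory Filter Topology
open scoped Real ENNReal RealInnerProductSpace

noncomputable section

/-- The constant `c̃ₙ = Γ((n+1)/2) / π^((n+1)/2)`. -/
def rieszConst (n : ℕ) : ℝ :=
  Real.Gamma (((n : ℝ) + 1) / 2) / Real.pi ^ (((n : ℝ) + 1) / 2)

/-- The chirp function `exp(i Σₖ wₖ yₖ²)`. -/
def chirp {n : ℕ} (w : Fin n → ℝ) (y : EuclideanSpace ℝ (Fin n)) : ℂ :=
  Complex.exp (Complex.I * ((∑ k, w k * y k ^ 2 : ℝ) : ℂ))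

/-- The truncated Riesz-type singular integral
`∫_{‖x-y‖ ≥ ε} (xⱼ - yⱼ) ‖x - y‖^{-(n+1)} g y dy`. -/
def truncRiesz {n : ℕ} (j : Fin n) (g : EuclideanSpace ℝ (Fin n) → ℂ)
    (x : EuclideanSpace ℝ (Fin n)) (ε : ℝ) : ℂ :=
  ∫ y in {y : EuclideanSpace ℝ (Fin n) | ε ≤ ‖x - y‖},
    ((x j - y j : ℝ) : ℂ) / ((‖x - y‖ : ℝ) : ℂ) ^ (n + 1) * g y

/-- The principal value `lim_{ε → 0⁺}` of the truncated Riesz-type singular integral. -/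
def pvRiesz {n : ℕ} (j : Fin n) (g : EuclideanSpace ℝ (Fin n) → ℂ)
    (x : EuclideanSpace ℝ (Fin n)) : ℂ :=
  limUnder (𝓝[>] (0 : ℝ)) (truncRiesz j g x)

/-- The `j`-th linear canonical Riesz transform with parameters `a b d`
(entries of the matrices `Aₖ = [[aₖ, bₖ], [cₖ, dₖ]]`). -/
def lcRiesz {n : ℕ} (a b d : Fin n → ℝ) (j : Fin n)
    (f : EuclideanSpace ℝ (Fin n) → ℂ) (x : EuclideanSpace ℝ (Fin n)) : ℂ :=
  (rieszConst n : ℂ) * chirp (fun k => -(d k) / (2 * b k)) x *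
    pvRiesz j (fun y => f y * chirp (fun k => a k / (2 * b k)) y) x

/-- The classical `j`-th Riesz transform (principal value). -/
def rieszTrans {n : ℕ} (j : Fin n) (f : EuclideanSpace ℝ (Fin n) → ℂ)
    (x : EuclideanSpace ℝ (Fin n)) : ℂ :=
  (rieszConst n : ℂ) * pvRiesz j f x

/-- The kernel of the linear canonical transform with parameters `a b d`. -/
def lctKernel {n : ℕ} (a b d : Fin n → ℝ)
    (x u : EuclideanSpace ℝ (Fin n)) : ℂ :=
  ∏ k, ((2 * (Real.pi : ℂ) * Complex.I * (b k : ℂ))⁻¹ ^ ((1 : ℂ) / 2) *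
    (Complex.exp (Complex.I * ((a k * x k ^ 2 / (2 * b k) : ℝ) : ℂ)) *
      (Complex.exp (-(Complex.I * ((x k * u k / b k : ℝ) : ℂ))) *
        Complex.exp (Complex.I * ((d k * u k ^ 2 / (2 * b k) : ℝ) : ℂ)))))

/-- The linear canonical transform with parameters `a b d`. -/
def lct {n : ℕ} (a b d : Fin n → ℝ) (f : EuclideanSpace ℝ (Fin n) → ℂ)
    (u : EuclideanSpace ℝ (Fin n)) : ℂ :=
  ∫ x, f x * lctKernel a b d x u

end

/-- The parameter space `(ρ₁, ρ₂, a₁, a₂, d₁, d₂)` for the family of matrices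
`Aₖ = [[aₖ, ρₖ cₖ],[cₖ, dₖ]]`: a triple `(ρ, a, d)`. -/
abbrev LCParam : Type := (Fin 2 → ℝ) × (Fin 2 → ℝ) × (Fin 2 → ℝ)

/-- The limiting parameter point `(ρ, a, d) = (-1, -1, 0, 0, 0, 0)`. -/
def lcParamLimit : LCParam := (fun _ => -1, fun _ => 0, fun _ => 0)

/-- The set of admissible parameters, those with `bₖ = ρₖ cₖ ≠ 0` for `k = 1, 2`. -/
def lcParamValid (c : Fin 2 → ℝ) : Set LCParam := {q | ∀ k, q.1 k * c k ≠ 0}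

/-!
Symmetrising the odd kernel turns the principal value into an absolutely convergent integral,
`pv R_j g (x) = ½ ∫ z_j |z|^{-(n+1)} (g (x - z) - g (x + z)) dz`, whose integrand is dominated
near `0` by a Lipschitz constant of `g` on `B(x, 1)` times `|z|^{1-n}` and away from `0` by
`|g (x - z)| + |g (x + z)|`. For `g = f · chirp w` with `f` Schwartz, `|g| = |f|` and that
Lipschitz constant is affine in `|x|`, locally uniformly in `w`. Dominated convergence in `z` and
then in `x` makes the pairing of the doubly chirped Riesz transform with `φ` continuous in the
chirp parameters `a / 2b` and `-d / 2b`; both tend to `0` at the limit point, where the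
transform is the classical one.
-/

open Complex Metric Set
open scoped NNReal

variable {n : ℕ}

local notation "E" n => EuclideanSpace ℝ (Fin n)

section Chirp

lemma norm_chirp (w : Fin n → ℝ) (y : E n) : ‖chirp w y‖ = 1 := by
  rw [chirp, norm_exp_I_mul_ofReal]

lemma norm_mul_chirp (g : (E n) → ℂ) (w : Fin n → ℝ) (y : E n) : ‖g y * chirp w y‖ = ‖g y‖ := by
  rw [norm_mul, norm_chirp, mul_one]

@[simp] lemma chirp_zero : chirp (0 : Fin n → ℝ) = 1 := by
  ext y; simp [chirp]

lemma continuous_chirp (w : Fin n → ℝ) : Continuous (chirp w) := by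
  unfold chirp; fun_prop

lemma continuous_chirp_apply (y : E n) : Continuous fun w : Fin n → ℝ => chirp w y := by
  unfold chirp; fun_prop

lemma norm_chirp_sub_chirp_le (w : Fin n → ℝ) (u v : E n) :
    ‖chirp w u - chirp w v‖ ≤ (∑ k, |w k|) * (‖u‖ + ‖v‖) * ‖u - v‖ := by
  have hfactor : chirp w u - chirp w v = chirp w v *
      (Complex.exp (I * ((∑ k, w k * u k ^ 2 - ∑ k, w k * v k ^ 2 : ℝ) : ℂ)) - 1) := by
    rw [chirp, chirp, mul_sub, ← Complex.exp_add, mul_one]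
    push_cast; ring_nf
  have hterm (k : Fin n) : |w k * u k ^ 2 - w k * v k ^ 2| ≤ |w k| * ((‖u‖ + ‖v‖) * ‖u - v‖) := by
    have hsub : |u k - v k| ≤ ‖u - v‖ := by simpa using PiLp.norm_apply_le (u - v) k
    have hadd : |u k + v k| ≤ ‖u‖ + ‖v‖ := (abs_add_le _ _).trans
      (add_le_add (by simpa using PiLp.norm_apply_le u k) (by simpa using PiLp.norm_apply_le v k))
    calc |w k * u k ^ 2 - w k * v k ^ 2| = |w k| * (|u k + v k| * |u k - v k|) := by
          rw [← abs_mul, ← abs_mul]; congr 1; ring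
      _ ≤ |w k| * ((‖u‖ + ‖v‖) * ‖u - v‖) := by gcongr
  rw [hfactor, norm_mul, norm_chirp, one_mul, mul_assoc, Finset.sum_mul]
  refine Real.norm_exp_I_mul_ofReal_sub_one_le.trans ?_
  rw [Real.norm_eq_abs, ← Finset.sum_sub_distrib]
  exact (Finset.abs_sum_le_sum_abs _ _).trans (Finset.sum_le_sum fun k _ => hterm k)

lemma lipschitzOnWith_mul_chirp {g : (E n) → ℂ} {K B : ℝ≥0} (hg : LipschitzWith K g)
    (hB : ∀ y, ‖g y‖ ≤ B) (w : Fin n → ℝ) (x : E n) :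
    LipschitzOnWith (K + B * (∑ k, ‖w k‖₊) * (2 * (‖x‖₊ + 1)))
      (fun y => g y * chirp w y) (closedBall x 1) := by
  refine LipschitzOnWith.of_dist_le_mul fun u hu v hv => ?_
  have huv : ‖u‖ + ‖v‖ ≤ 2 * (‖x‖ + 1) := by
    have := norm_le_norm_add_norm_sub' u x
    have := norm_le_norm_add_norm_sub' v x
    rw [mem_closedBall, dist_eq_norm] at hu hv
    linarith
  have hsplit : g u * chirp w u - g v * chirp w v
      = (g u - g v) * chirp w u + g v * (chirp w u - chirp w v) := by ring
  rw [dist_eq_norm, dist_eq_norm, hsplit]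
  calc ‖(g u - g v) * chirp w u + g v * (chirp w u - chirp w v)‖
      ≤ K * ‖u - v‖ + B * ((∑ k, |w k|) * (‖u‖ + ‖v‖) * ‖u - v‖) := by
        refine (norm_add_le _ _).trans (add_le_add ?_ ?_)
        · rw [norm_mul, norm_chirp, mul_one]; exact hg.norm_sub_le u v
        · rw [norm_mul]
          exact mul_le_mul (hB v) (norm_chirp_sub_chirp_le w u v) (norm_nonneg _) B.2
    _ ≤ K * ‖u - v‖ + B * ((∑ k, |w k|) * (2 * (‖x‖ + 1)) * ‖u - v‖) := by gcongr
    _ = _ := by push_cast; simp only [Real.norm_eq_abs]; ring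

end Chirp

noncomputable section Kernel

def rieszKernel (j : Fin n) (z : E n) : ℂ := ((z j : ℝ) : ℂ) / ((‖z‖ : ℝ) : ℂ) ^ (n + 1)

def rieszSymmIntegrand (j : Fin n) (g : (E n) → ℂ) (x z : E n) : ℂ :=
  rieszKernel j z * (g (x - z) - g (x + z))

lemma rieszKernel_neg (j : Fin n) (z : E n) : rieszKernel j (-z) = -rieszKernel j z := by
  simp [rieszKernel, neg_div]

lemma measurable_rieszKernel (j : Fin n) : Measurable (rieszKernel (n := n) j) := by
  unfold rieszKernel; fun_prop

lemma norm_rieszKernel_le (j : Fin n) (z : E n) : ‖rieszKernel j z‖ ≤ (‖z‖ ^ n)⁻¹ := by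
  rcases eq_or_ne z 0 with rfl | hz
  · simp [rieszKernel]
  have hz' : 0 < ‖z‖ := norm_pos_iff.mpr hz
  rw [rieszKernel, norm_div, norm_pow, Complex.norm_real, Complex.norm_real, norm_norm,
    div_le_iff₀ (by positivity), pow_succ, ← mul_assoc, inv_mul_cancel₀ (by positivity), one_mul]
  exact PiLp.norm_apply_le z j

lemma measurable_rieszSymmIntegrand_uncurry (j : Fin n) {g : (E n) → ℂ} (hg : Continuous g) :
    Measurable fun p : (E n) × (E n) => rieszSymmIntegrand j g p.1 p.2 :=
  ((measurable_rieszKernel j).comp measurable_snd).mul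
    ((hg.comp (continuous_fst.sub continuous_snd)).sub
      (hg.comp (continuous_fst.add continuous_snd))).measurable

lemma integral_indicator_rieszKernel_mul_eq_truncRiesz (j : Fin n) (g : (E n) → ℂ)
    (x : E n) (ε : ℝ) :
    ∫ z, {z : E n | ε ≤ ‖z‖}.indicator (rieszKernel j) z * g (x - z) = truncRiesz j g x ε := by
  have hS : MeasurableSet {y : E n | ε ≤ ‖x - y‖} :=
    measurableSet_le measurable_const (measurable_const.sub measurable_id).norm
  rw [truncRiesz, ← integral_indicator hS]
  conv_rhs => rw [← integral_sub_left_eq_self _ volume x]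
  congr 1 with z
  by_cases hz : ε ≤ ‖z‖ <;> simp [hz, rieszKernel]

lemma integral_indicator_rieszKernel_mul_add_eq_neg_truncRiesz (j : Fin n) (g : (E n) → ℂ)
    (x : E n) (ε : ℝ) :
    ∫ z, {z : E n | ε ≤ ‖z‖}.indicator (rieszKernel j) z * g (x + z) = -truncRiesz j g x ε := by
  rw [← integral_indicator_rieszKernel_mul_eq_truncRiesz, ← integral_neg,
    ← integral_neg_eq_self]
  congr 1 with z
  by_cases hz : ε ≤ ‖z‖ <;> simp [hz, rieszKernel_neg, sub_eq_add_neg]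

lemma truncRiesz_eq_half_integral_symm (j : Fin n) {g : (E n) → ℂ} (hg : Integrable g)
    (x : E n) {ε : ℝ} (hε : 0 < ε) :
    truncRiesz j g x ε
      = (1 / 2 : ℂ) * ∫ z, {z : E n | ε ≤ ‖z‖}.indicator (rieszSymmIntegrand j g x) z := by
  set T := {z : E n | ε ≤ ‖z‖}
  have hT : MeasurableSet T := measurableSet_le measurable_const measurable_norm
  have hK_meas : AEStronglyMeasurable (T.indicator (rieszKernel j)) volume :=
    ((measurable_rieszKernel j).indicator hT).aestronglyMeasurable
  have hK_bdd : ∀ z, ‖T.indicator (rieszKernel j) z‖ ≤ (ε ^ n)⁻¹ := by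
    intro z
    by_cases hz : z ∈ T
    · rw [indicator_of_mem hz]
      exact (norm_rieszKernel_le j z).trans (by gcongr; exact hz)
    · simp [indicator_of_notMem hz, hε.le]
  have hsub : Integrable fun z => T.indicator (rieszKernel j) z * g (x - z) :=
    (hg.comp_sub_left x).bdd_mul hK_meas (.of_forall hK_bdd)
  have hadd : Integrable fun z => T.indicator (rieszKernel j) z * g (x + z) :=
    (hg.comp_add_left x).bdd_mul hK_meas (.of_forall hK_bdd)
  have hsymm : T.indicator (rieszSymmIntegrand j g x)
      = fun z => T.indicator (rieszKernel j) z * g (x - z)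
        - T.indicator (rieszKernel j) z * g (x + z) := by
    ext z; by_cases hz : z ∈ T <;> simp [hz, rieszSymmIntegrand, mul_sub]
  rw [hsymm, integral_sub hsub hadd, integral_indicator_rieszKernel_mul_eq_truncRiesz,
    integral_indicator_rieszKernel_mul_add_eq_neg_truncRiesz]
  ring

lemma pvRiesz_eq_half_integral_symm (j : Fin n) {g : (E n) → ℂ} (hg : Integrable g) {x : E n}
    (hsymm : Integrable (rieszSymmIntegrand j g x)) :
    pvRiesz j g x = (1 / 2 : ℂ) * ∫ z, rieszSymmIntegrand j g x z := by
  have hT (ε : ℝ) : MeasurableSet {z : E n | ε ≤ ‖z‖} :=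
    measurableSet_le measurable_const measurable_norm
  have hlim : Tendsto (fun ε => ∫ z, {z : E n | ε ≤ ‖z‖}.indicator (rieszSymmIntegrand j g x) z)
      (𝓝[>] 0) (𝓝 (∫ z, rieszSymmIntegrand j g x z)) := by
    refine tendsto_integral_filter_of_dominated_convergence (fun z => ‖rieszSymmIntegrand j g x z‖)
      (.of_forall fun ε => hsymm.aestronglyMeasurable.indicator (hT ε))
      (.of_forall fun ε => .of_forall fun z => norm_indicator_le_norm_self _ z) hsymm.norm ?_
    refine .of_forall fun z => tendsto_const_nhds.congr' ?_
    rcases eq_or_ne z 0 with rfl | hz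
    · exact .of_forall fun ε => by simp [indicator_apply, rieszSymmIntegrand]
    filter_upwards [Ioo_mem_nhdsGT (norm_pos_iff.mpr hz)] with ε hε
    exact (indicator_of_mem (show z ∈ {z : E n | ε ≤ ‖z‖} from hε.2.le) _).symm
  refine Tendsto.limUnder_eq (Tendsto.congr' ?_ (hlim.const_mul (1 / 2 : ℂ)))
  filter_upwards [self_mem_nhdsWithin] with ε hε
  exact (truncRiesz_eq_half_integral_symm j hg x hε).symm

end Kernel

section PrincipalValue

variable {j : Fin n} {g : (E n) → ℂ} {h : (E n) → ℝ} {K : ℝ≥0} {x : E n}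

noncomputable def rieszDominant (M : ℝ) (h : (E n) → ℝ) (x z : E n) : ℝ :=
  (ball (0 : E n) 1).indicator (fun z => M * ‖z‖ ^ (1 - (n : ℝ))) z + (h (x - z) + h (x + z))

lemma norm_rieszSymmIntegrand_le (hgh : ∀ y, ‖g y‖ ≤ h y)
    (hlip : LipschitzOnWith K g (closedBall x 1)) (z : E n) :
    ‖rieszSymmIntegrand j g x z‖ ≤ rieszDominant (2 * K) h x z := by
  have hh : 0 ≤ h (x - z) + h (x + z) :=
    add_nonneg ((norm_nonneg _).trans (hgh _)) ((norm_nonneg _).trans (hgh _))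
  rw [rieszDominant]
  rcases eq_or_ne z 0 with rfl | hz
  · have : 0 ≤ (ball (0 : E n) 1).indicator (fun z => 2 * (K : ℝ) * ‖z‖ ^ (1 - (n : ℝ))) 0 :=
      indicator_nonneg (fun z _ => by positivity) _
    simpa [rieszSymmIntegrand] using add_nonneg this hh
  have hz' : 0 < ‖z‖ := norm_pos_iff.mpr hz
  rw [rieszSymmIntegrand, norm_mul]
  rcases lt_or_ge ‖z‖ 1 with hz1 | hz1
  · have hdiff : ‖g (x - z) - g (x + z)‖ ≤ K * (2 * ‖z‖) := by
      have hsub : (x - z) - (x + z) = -(2 : ℝ) • z := by rw [neg_smul, two_smul]; abel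
      refine hlip.norm_sub_le_of_le ?_ ?_ (by rw [hsub, norm_smul]; norm_num)
      · simpa [dist_eq_norm] using hz1.le
      · simpa [dist_eq_norm] using hz1.le
    have hpow : (‖z‖ ^ n)⁻¹ * ‖z‖ = ‖z‖ ^ (1 - (n : ℝ)) := by
      rw [Real.rpow_sub hz', Real.rpow_one, Real.rpow_natCast, div_eq_inv_mul]
    rw [indicator_of_mem (mem_ball_zero_iff.mpr hz1)]
    calc ‖rieszKernel j z‖ * ‖g (x - z) - g (x + z)‖ ≤ (‖z‖ ^ n)⁻¹ * (K * (2 * ‖z‖)) :=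
          mul_le_mul (norm_rieszKernel_le j z) hdiff (norm_nonneg _) (by positivity)
      _ = 2 * K * ‖z‖ ^ (1 - (n : ℝ)) := by rw [← hpow]; ring
      _ ≤ _ := le_add_of_nonneg_right hh
  · have hkernel : ‖rieszKernel j z‖ ≤ 1 :=
      (norm_rieszKernel_le j z).trans (inv_le_one_of_one_le₀ (one_le_pow₀ hz1))
    rw [indicator_of_notMem (by simpa using hz1), zero_add]
    calc ‖rieszKernel j z‖ * ‖g (x - z) - g (x + z)‖ ≤ 1 * (‖g (x - z)‖ + ‖g (x + z)‖) :=
          mul_le_mul hkernel (norm_sub_le _ _) (norm_nonneg _) zero_le_one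
      _ ≤ h (x - z) + h (x + z) := by rw [one_mul]; exact add_le_add (hgh _) (hgh _)

lemma integrableOn_ball_norm_rpow (hn : 1 ≤ n) :
    IntegrableOn (fun z : E n => ‖z‖ ^ (1 - (n : ℝ))) (ball 0 1) := by
  refine integrableOn_ball_of_norm_le_rpow (C := 1) (α := (n : ℝ) - 1) (by simpa using hn)
    (by simp) (.of_forall fun z => ?_)
    (measurable_norm.pow_const _).aestronglyMeasurable
  rw [Real.norm_eq_abs, abs_of_nonneg (by positivity), one_mul, neg_sub]

lemma integrable_rieszDominant (hn : 1 ≤ n) (M : ℝ) (hh : Integrable h) (x : E n) :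
    Integrable (rieszDominant M h x) :=
  (IntegrableOn.integrable_indicator ((integrableOn_ball_norm_rpow hn).const_mul M)
    measurableSet_ball).add
    ((hh.comp_sub_left x).add (hh.comp_add_left x))

lemma integral_rieszDominant (hn : 1 ≤ n) (M : ℝ) (hh : Integrable h) (x : E n) :
    ∫ z, rieszDominant M h x z
      = M * (∫ z in ball (0 : E n) 1, ‖z‖ ^ (1 - (n : ℝ))) + 2 * ∫ y, h y := by
  have hball := IntegrableOn.integrable_indicator ((integrableOn_ball_norm_rpow hn).const_mul M)
    measurableSet_ball
  have htrans : Integrable fun z => h (x - z) + h (x + z) :=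
    (hh.comp_sub_left x).add (hh.comp_add_left x)
  unfold rieszDominant
  rw [integral_add hball htrans,
    integral_add (hh.comp_sub_left x) (hh.comp_add_left x), integral_indicator measurableSet_ball,
    integral_const_mul, integral_sub_left_eq_self h volume x, integral_add_left_eq_self h x]
  ring

lemma integrable_rieszSymmIntegrand (hn : 1 ≤ n) (hg : Continuous g) (hgh : ∀ y, ‖g y‖ ≤ h y)
    (hh : Integrable h) (hlip : LipschitzOnWith K g (closedBall x 1)) :
    Integrable (rieszSymmIntegrand j g x) :=
  (integrable_rieszDominant hn _ hh x).mono'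
    ((measurable_rieszSymmIntegrand_uncurry j hg).comp measurable_prodMk_left).aestronglyMeasurable
    (.of_forall (norm_rieszSymmIntegrand_le hgh hlip))

lemma pvRiesz_eq_half_integral_symm_of_lipschitzOnWith (hn : 1 ≤ n) (hg : Continuous g)
    (hgh : ∀ y, ‖g y‖ ≤ h y) (hh : Integrable h) (hlip : LipschitzOnWith K g (closedBall x 1)) :
    pvRiesz j g x = (1 / 2 : ℂ) * ∫ z, rieszSymmIntegrand j g x z :=
  pvRiesz_eq_half_integral_symm j (hh.mono' hg.aestronglyMeasurable (.of_forall hgh))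
    (integrable_rieszSymmIntegrand hn hg hgh hh hlip)

lemma norm_pvRiesz_le (hn : 1 ≤ n) (hg : Continuous g) (hgh : ∀ y, ‖g y‖ ≤ h y)
    (hh : Integrable h) (hlip : LipschitzOnWith K g (closedBall x 1)) :
    ‖pvRiesz j g x‖ ≤ K * (∫ z in ball (0 : E n) 1, ‖z‖ ^ (1 - (n : ℝ))) + ∫ y, h y := by
  rw [pvRiesz_eq_half_integral_symm_of_lipschitzOnWith hn hg hgh hh hlip, norm_mul]
  have hint := norm_integral_le_of_norm_le (integrable_rieszDominant hn (2 * K) hh x)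
    (.of_forall (norm_rieszSymmIntegrand_le (j := j) hgh hlip))
  rw [integral_rieszDominant hn _ hh] at hint
  norm_num
  linarith

lemma aestronglyMeasurable_pvRiesz (hn : 1 ≤ n) (hg : Continuous g) (hgh : ∀ y, ‖g y‖ ≤ h y)
    (hh : Integrable h) (hlip : ∀ x, ∃ K, LipschitzOnWith K g (closedBall x 1)) :
    AEStronglyMeasurable (pvRiesz j g) volume := by
  have hpv : pvRiesz j g = fun x => (1 / 2 : ℂ) * ∫ z, rieszSymmIntegrand j g x z := by
    ext x
    obtain ⟨K, hK⟩ := hlip x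
    exact pvRiesz_eq_half_integral_symm_of_lipschitzOnWith hn hg hgh hh hK
  rw [hpv]
  exact ((measurable_rieszSymmIntegrand_uncurry j hg).stronglyMeasurable.integral_prod_right'
    |>.const_mul _).aestronglyMeasurable

end PrincipalValue

lemma SchwartzMap.exists_lipschitzWith {V F : Type*} [NormedAddCommGroup V] [NormedSpace ℝ V]
    [NormedAddCommGroup F] [NormedSpace ℝ F] (f : SchwartzMap V F) : ∃ K, LipschitzWith K f := by
  refine ⟨(SchwartzMap.seminorm ℝ 0 1 f).toNNReal,
    lipschitzWith_of_nnnorm_fderiv_le f.differentiable fun x => ?_⟩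
  rw [← NNReal.coe_le_coe, coe_nnnorm, ← norm_iteratedFDeriv_one (𝕜 := ℝ)]
  simpa using f.le_seminorm ℝ 0 1 x |>.trans (Real.le_coe_toNNReal _)

lemma SchwartzMap.exists_norm_le {V F : Type*} [NormedAddCommGroup V] [NormedSpace ℝ V]
    [NormedAddCommGroup F] [NormedSpace ℝ F] (f : SchwartzMap V F) :
    ∃ B : ℝ≥0, ∀ y, ‖f y‖ ≤ B :=
  ⟨(SchwartzMap.seminorm ℝ 0 0 f).toNNReal,
    fun y => (f.norm_le_seminorm ℝ y).trans (Real.le_coe_toNNReal _)⟩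

lemma SchwartzMap.integrable_add_mul_norm_mul {V F : Type*} [NormedAddCommGroup V]
    [NormedSpace ℝ V] [MeasurableSpace V] [BorelSpace V] [FiniteDimensional ℝ V]
    [NormedAddCommGroup F] [NormedSpace ℝ F] {μ : Measure V} [μ.IsAddHaarMeasure]
    (φ : SchwartzMap V F) (a b : ℝ) :
    Integrable (fun x => (a + b * ‖x‖) * ‖φ x‖) μ := by
  have := (φ.integrable.norm.const_mul a).add ((φ.integrable_pow_mul μ 1).const_mul b)
  refine this.congr (.of_forall fun x => ?_)
  simp only [Pi.add_apply, pow_one]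
  ring


noncomputable def chirpedRiesz (u v : Fin n → ℝ) (j : Fin n) (f : (E n) → ℂ) (x : E n) : ℂ :=
  rieszConst n * chirp v x * pvRiesz j (fun y => f y * chirp u y) x

lemma lcRiesz_eq_chirpedRiesz (a b d : Fin n → ℝ) (j : Fin n) (f : (E n) → ℂ) :
    lcRiesz a b d j f
      = chirpedRiesz (fun k => a k / (2 * b k)) (fun k => -(d k) / (2 * b k)) j f :=
  rfl

lemma rieszTrans_eq_chirpedRiesz_zero (j : Fin n) (f : (E n) → ℂ) :
    rieszTrans j f = chirpedRiesz 0 0 j f := by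
  ext x; simp [rieszTrans, chirpedRiesz]

section ChirpedRiesz

variable (j : Fin n) (f φ : SchwartzMap (E n) ℂ)

lemma continuous_pvRiesz_mul_chirp (hn : 1 ≤ n) (x : E n) :
    Continuous fun w => pvRiesz j (fun y => f y * chirp w y) x := by
  obtain ⟨K, hK⟩ := f.exists_lipschitzWith
  obtain ⟨B, hB⟩ := f.exists_norm_le
  have hcont (w : Fin n → ℝ) : Continuous fun y => f y * chirp w y :=
    f.continuous.mul (continuous_chirp w)
  have hpv : (fun w => pvRiesz j (fun y => f y * chirp w y) x)
      = fun w => (1 / 2 : ℂ) * ∫ z, rieszSymmIntegrand j (fun y => f y * chirp w y) x z :=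
    funext fun w => pvRiesz_eq_half_integral_symm_of_lipschitzOnWith hn (hcont w)
      (fun y => (norm_mul_chirp f w y).le) f.integrable.norm (lipschitzOnWith_mul_chirp hK hB w x)
  rw [hpv, continuous_iff_continuousAt]
  intro w₀
  set W : ℝ≥0 := ∑ k, ‖w₀ k‖₊ + 1
  have hW : ∀ᶠ w in 𝓝 w₀, ∑ k, ‖w k‖₊ ≤ W :=
    (show Continuous fun w : Fin n → ℝ => ∑ k, ‖w k‖₊ by fun_prop).continuousAt.eventually
      (Iic_mem_nhds (lt_add_one _))
  set Kx : ℝ≥0 := K + B * W * (2 * (‖x‖₊ + 1))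
  refine continuousAt_const.mul (continuousAt_of_dominated
    (bound := rieszDominant (2 * Kx) (fun y => ‖f y‖) x)
    (.of_forall fun w => ((measurable_rieszSymmIntegrand_uncurry j (hcont w)).comp
      measurable_prodMk_left).aestronglyMeasurable) ?_
    (integrable_rieszDominant hn _ f.integrable.norm x) (.of_forall fun z => ?_))
  · filter_upwards [hW] with w hw
    exact .of_forall (norm_rieszSymmIntegrand_le (fun y => (norm_mul_chirp f w y).le)
      ((lipschitzOnWith_mul_chirp hK hB w x).weaken (by simp only [Kx]; gcongr)))
  · unfold rieszSymmIntegrand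
    exact (continuous_const.mul (((continuous_const.mul (continuous_chirp_apply _)).sub
      (continuous_const.mul (continuous_chirp_apply _))))).continuousAt

lemma aestronglyMeasurable_chirpedRiesz (hn : 1 ≤ n) (u v : Fin n → ℝ) :
    AEStronglyMeasurable (chirpedRiesz u v j f) volume := by
  obtain ⟨K, hK⟩ := f.exists_lipschitzWith
  obtain ⟨B, hB⟩ := f.exists_norm_le
  exact ((continuous_const.mul (continuous_chirp v)).aestronglyMeasurable).mul
    (aestronglyMeasurable_pvRiesz hn (f.continuous.mul (continuous_chirp u))
      (fun y => (norm_mul_chirp f u y).le) f.integrable.norm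
      fun x => ⟨_, lipschitzOnWith_mul_chirp hK hB u x⟩)

lemma exists_norm_chirpedRiesz_le (hn : 1 ≤ n) (W : ℝ≥0) :
    ∃ a b : ℝ, ∀ u : Fin n → ℝ, ∑ k, ‖u k‖₊ ≤ W → ∀ v x,
      ‖chirpedRiesz u v j f x‖ ≤ a + b * ‖x‖ := by
  obtain ⟨K, hK⟩ := f.exists_lipschitzWith
  obtain ⟨B, hB⟩ := f.exists_norm_le
  set κ := ∫ z in ball (0 : E n) 1, ‖z‖ ^ (1 - (n : ℝ))
  set c := |rieszConst n|
  refine ⟨c * ((K + 2 * B * W) * κ + ∫ y, ‖f y‖), c * (2 * B * W * κ), fun u hu v x => ?_⟩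
  have hpv := norm_pvRiesz_le hn (f.continuous.mul (continuous_chirp u))
    (fun y => (norm_mul_chirp f u y).le) f.integrable.norm
    ((lipschitzOnWith_mul_chirp hK hB u x).weaken
      (show _ ≤ K + B * W * (2 * (‖x‖₊ + 1)) by gcongr)) (j := j)
  rw [chirpedRiesz, norm_mul, norm_mul, norm_chirp, mul_one, Complex.norm_real,
    Real.norm_eq_abs]
  calc c * ‖pvRiesz j (fun y => f y * chirp u y) x‖
      ≤ c * ((K + B * W * (2 * (‖x‖ + 1))) * κ + ∫ y, ‖f y‖) := by
        gcongr; push_cast at hpv; exact hpv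
    _ = _ := by ring

lemma integrable_chirpedRiesz_mul (hn : 1 ≤ n) (u v : Fin n → ℝ) :
    Integrable fun x => chirpedRiesz u v j f x * φ x := by
  obtain ⟨a, b, hab⟩ := exists_norm_chirpedRiesz_le j f hn (∑ k, ‖u k‖₊)
  refine (φ.integrable_add_mul_norm_mul (μ := volume) a b).mono'
    ((aestronglyMeasurable_chirpedRiesz j f hn u v).mul φ.continuous.aestronglyMeasurable)
    (.of_forall fun x => ?_)
  rw [norm_mul]
  exact mul_le_mul_of_nonneg_right (hab u le_rfl v x) (norm_nonneg _)

lemma continuous_integral_chirpedRiesz_mul (hn : 1 ≤ n) :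
    Continuous fun p : (Fin n → ℝ) × (Fin n → ℝ) => ∫ x, chirpedRiesz p.1 p.2 j f x * φ x := by
  rw [continuous_iff_continuousAt]
  rintro ⟨u₀, v₀⟩
  obtain ⟨a, b, hab⟩ := exists_norm_chirpedRiesz_le j f hn (∑ k, ‖u₀ k‖₊ + 1)
  have hW : ∀ᶠ p in 𝓝 (u₀, v₀), ∑ k, ‖(p.1 : Fin n → ℝ) k‖₊ ≤ ∑ k, ‖u₀ k‖₊ + 1 :=
    (show Continuous fun p : (Fin n → ℝ) × (Fin n → ℝ) => ∑ k, ‖p.1 k‖₊ by fun_prop)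
      |>.continuousAt.eventually (Iic_mem_nhds (lt_add_one _))
  refine continuousAt_of_dominated (bound := fun x => (a + b * ‖x‖) * ‖φ x‖)
    (.of_forall fun p => (aestronglyMeasurable_chirpedRiesz j f hn p.1 p.2).mul
      φ.continuous.aestronglyMeasurable) ?_ (φ.integrable_add_mul_norm_mul a b)
    (.of_forall fun x => ?_)
  · filter_upwards [hW] with p hp
    refine .of_forall fun x => ?_
    rw [norm_mul]
    exact mul_le_mul_of_nonneg_right (hab p.1 hp p.2 x) (norm_nonneg _)
  · unfold chirpedRiesz
    exact (((continuous_const.mul ((continuous_chirp_apply x).comp continuous_snd)).mul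
      ((continuous_pvRiesz_mul_chirp j f hn x).comp continuous_fst)).mul
        continuous_const).continuousAt

end ChirpedRiesz

/-- In `ℝ²`, fix `j ∈ {1,2}` and nonzero reals `c₁, c₂`, and for
parameters `(ρ₁, ρ₂, a₁, a₂, d₁, d₂)` with `ρₖ cₖ ≠ 0` let `Aₖ = [[aₖ, ρₖ cₖ],[cₖ, dₖ]]`.
Then for all Schwartz `f, φ`, as `(ρ, a, d) → (-1, -1, 0, 0, 0, 0)`, the pairing
`∫ (R_j^A f − R_j f) φ` converges to `0`; that is, `R_j^A f → R_j f` as tempered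
distributions on `ℝ²`. -/
theorem lcRiesz_tendsto_riesz_distribution (c : Fin 2 → ℝ) (hc : ∀ k, c k ≠ 0) (j : Fin 2)
    (f φ : SchwartzMap (EuclideanSpace ℝ (Fin 2)) ℂ) :
    Tendsto (fun q : LCParam =>
        ∫ x : EuclideanSpace ℝ (Fin 2),
          (lcRiesz q.2.1 (fun k => q.1 k * c k) q.2.2 j (⇑f) x -
            rieszTrans j (⇑f) x) * φ x)
      (𝓝[lcParamValid c] lcParamLimit)
      (𝓝 (0 : ℂ)) := by
  set chirpParams : LCParam → (Fin 2 → ℝ) × (Fin 2 → ℝ) := fun q =>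
    (fun k => q.2.1 k / (2 * (q.1 k * c k)), fun k => -(q.2.2 k) / (2 * (q.1 k * c k)))
  have hb (k : Fin 2) : 2 * (lcParamLimit.1 k * c k) ≠ 0 := by simp [lcParamLimit, hc k]
  have hparams : Tendsto chirpParams (𝓝 lcParamLimit) (𝓝 0) := by
    have hcont : ContinuousAt chirpParams lcParamLimit := by fun_prop (disch := exact hb _)
    have hzero : chirpParams lcParamLimit = 0 := by
      ext k <;> simp [chirpParams, lcParamLimit]
    exact hzero ▸ hcont.tendsto
  set pairing := fun p : (Fin 2 → ℝ) × (Fin 2 → ℝ) => ∫ x, chirpedRiesz p.1 p.2 j f x * φ x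
  have hpairing : Tendsto pairing (𝓝 0) (𝓝 (pairing 0)) :=
    (continuous_integral_chirpedRiesz_mul j f φ (by norm_num)).tendsto 0
  have hdiff : Tendsto (fun q => pairing (chirpParams q) - pairing 0) (𝓝 lcParamLimit) (𝓝 0) := by
    have := (hpairing.comp hparams).sub_const (pairing 0)
    rwa [sub_self] at this
  refine (hdiff.mono_left nhdsWithin_le_nhds).congr fun q => ?_
  rw [lcRiesz_eq_chirpedRiesz, rieszTrans_eq_chirpedRiesz_zero, ← integral_sub
    (integrable_chirpedRiesz_mul j f φ (by norm_num) _ _)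
    (integrable_chirpedRiesz_mul j f φ (by norm_num) _ _)]
  simp only [sub_mul]
  rfl
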